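/- arXiv:2502.00876 — 2 statements merged into one kernel-verified Lean document; each statement's English description precedes it below -/
import Mathlib

section
/- The $\Lambda$-module $\mathrm{Hom}_{\Lambda}(\mathcal{T},\Lambda)$, where $\mathcal{T} = \mathbb{Q}_p[[X_1,X_2,X_3,X_4]]/(\{X_iX_j\}_{i\ne j})$ is viewed as a $\Lambda = \mathbb{Q}_p[[X]]$-algebra via $X\mapsto X_1+X_2+X_3+X_4$, requires exactly $3$ generators as a $\mathcal{T}$-module, i.e. $\dim_{\mathbb{Q}_p} \mathrm{Hom}_{\Lambda}(\mathcal{T},\Lambda)\otimes_{\mathcal{T}}\mathcal{T}/\mathfrak{m}_{\mathcal{T}} = 3$. -/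
set_option maxHeartbeats 1000000
set_option synthInstance.maxHeartbeats 800000

noncomputable section

/-- The ideal of `ℚ_p[[X₁,X₂,X₃,X₄]]` generated by the mixed products `XᵢXⱼ`, `i ≠ j`. -/
def mixedProductsIdeal (p : ℕ) [Fact p.Prime] : Ideal (MvPowerSeries (Fin 4) ℚ_[p]) :=
  Ideal.span {f | ∃ i j : Fin 4, i ≠ j ∧ f = MvPowerSeries.X i * MvPowerSeries.X j}

/-- `𝒯 = ℚ_p[[X₁,…,X₄]]/({XᵢXⱼ}_{i≠j})`. -/
abbrev Tring (p : ℕ) [Fact p.Prime] :=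
  MvPowerSeries (Fin 4) ℚ_[p] ⧸ mixedProductsIdeal p

/-- The maximal ideal `𝔪_𝒯` of `𝒯`, generated by the images of the `Xᵢ`. -/
def maxIdealT (p : ℕ) [Fact p.Prime] : Ideal (Tring p) :=
  Ideal.span (Set.range fun i : Fin 4 =>
    Ideal.Quotient.mk (mixedProductsIdeal p) (MvPowerSeries.X i))

/-! Restricting to the coordinate axes embeds `𝒯` into `Λ⁴` (as the tuples whose constant terms
agree), and `h1`, `h2` force `Λ` to act diagonally there, since a ring endomorphism of `Λ`
fixing the constants and `X` is the identity. With `πᵢ` the `i`-th projection this gives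
`Xᵢ t = πᵢ(t) • Xᵢ`, hence `X φ(t) = ∑ᵢ πᵢ(t) φ(Xᵢ)` for `φ ∈ Hom_Λ(𝒯, Λ)`.
So `φ ↦ (φ(Xᵢ)(0))ᵢ` kills `𝔪 Hom_Λ(𝒯, Λ)` and lands in the hyperplane `∑ vᵢ = 0`; it is onto
the hyperplane (divide `∑ vᵢ πᵢ` by `X`), and its kernel is `𝔪 Hom_Λ(𝒯, Λ)`: if `φ(Xᵢ) = X hᵢ`,
then `φ = ∑ hᵢ • (ψᵢ ∘ Xᵢ·)` for any `ψᵢ` with `ψᵢ(Xᵢ) = 1`. Thus the quotient is a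
hyperplane in `ℚ_p⁴`. -/

open scoped PowerSeries

theorem Finsupp.exists_eq_single_of_forall_not_single_add_single_le {σ : Type*} [Nonempty σ]
    {α : σ →₀ ℕ} (h : ∀ i j, i ≠ j → ¬ single i 1 + single j 1 ≤ α) :
    ∃ i, α = single i (α i) := by
  classical
  refine card_support_le_one.1 (not_lt.1 fun hcard => ?_)
  obtain ⟨i, hi, j, hj, hij⟩ := Finset.one_lt_card.1 hcard
  refine h i j hij fun k => ?_
  rw [mem_support_iff] at hi hj
  rcases eq_or_ne k i with rfl | hki
  · simp [hij]; omega
  · rcases eq_or_ne k j with rfl | hkj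
    · simp [hki]; omega
    · simp [hki, hkj]

namespace MvPowerSeries

variable {σ R : Type*} [CommSemiring R]

def restrictAxis (i : σ) : MvPowerSeries σ R →+* R⟦X⟧ where
  toFun F := PowerSeries.mk fun n => coeff (Finsupp.single i n) F
  map_one' := by
    classical
    ext n
    simp [coeff_one, Finsupp.single_eq_zero]
  map_mul' F G := by
    classical
    ext n
    simp only [PowerSeries.coeff_mk, PowerSeries.coeff_mul]
    rw [coeff_mul, Finsupp.antidiagonal_single, Finset.sum_map]
    rfl
  map_zero' := by ext; simp
  map_add' F G := by ext; simp

@[simp]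
theorem coeff_restrictAxis (i : σ) (n : ℕ) (F : MvPowerSeries σ R) :
    PowerSeries.coeff n (restrictAxis i F) = coeff (Finsupp.single i n) F :=
  PowerSeries.coeff_mk n fun n => coeff (Finsupp.single i n) F

@[simp]
theorem constantCoeff_restrictAxis (i : σ) (F : MvPowerSeries σ R) :
    PowerSeries.constantCoeff (restrictAxis i F) = constantCoeff F := by
  rw [← PowerSeries.coeff_zero_eq_constantCoeff_apply, coeff_restrictAxis, Finsupp.single_zero,
    coeff_zero_eq_constantCoeff_apply]

@[simp]
theorem restrictAxis_C (i : σ) (a : R) :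
    restrictAxis i (C a : MvPowerSeries σ R) = PowerSeries.C a := by
  classical
  ext n
  simp [coeff_C, PowerSeries.coeff_C, Finsupp.single_eq_zero]

theorem restrictAxis_X [DecidableEq σ] (i j : σ) :
    restrictAxis i (X j : MvPowerSeries σ R) = if j = i then PowerSeries.X else 0 := by
  ext n
  split_ifs with h
  · subst h
    simp [coeff_X, PowerSeries.coeff_X, Finsupp.single_eq_single_iff]
  · simp [coeff_X, Finsupp.single_eq_single_iff, Ne.symm h]

variable (σ R) in
def axesIdeal : Ideal (MvPowerSeries σ R) :=
  Ideal.span {f | ∃ i j : σ, i ≠ j ∧ f = X i * X j}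

theorem axesIdeal_le_ker_restrictAxis (i : σ) :
    axesIdeal σ R ≤ RingHom.ker (restrictAxis i) := by
  classical
  rw [axesIdeal, Ideal.span_le]
  rintro _ ⟨j, k, hjk, rfl⟩
  rw [SetLike.mem_coe, RingHom.mem_ker, map_mul, restrictAxis_X, restrictAxis_X]
  split_ifs with hj hk <;> simp_all

theorem mem_axesIdeal_of_restrictAxis_eq_zero [Finite σ] [Nonempty σ] {F : MvPowerSeries σ R}
    (hF : ∀ i, restrictAxis i F = 0) : F ∈ axesIdeal σ R := by
  classical
  have := Fintype.ofFinite σ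
  let e : σ × σ → σ →₀ ℕ := fun q => Finsupp.single q.1 1 + Finsupp.single q.2 1
  let P : (σ →₀ ℕ) → σ × σ → Prop := fun α q => q.1 ≠ q.2 ∧ e q ≤ α
  -- each monomial divisible by two distinct variables is charged to one chosen such pair
  let pair : (σ →₀ ℕ) → Option (σ × σ) := fun α =>
    if h : ∃ q, P α q then some h.choose else none
  have pair_spec : ∀ α q, pair α = some q → P α q := by
    intro α q hq
    simp only [pair] at hq
    split_ifs at hq with h
    cases hq
    exact h.choose_spec
  let G : σ × σ → MvPowerSeries σ R := fun q β =>
    if pair (β + e q) = some q then coeff (β + e q) F else 0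
  have coeff_term : ∀ q α,
      coeff α (X q.1 * X q.2 * G q) = if pair α = some q then coeff α F else 0 := by
    intro q α
    rw [X_def, X_def, monomial_mul_monomial, one_mul, coeff_monomial_mul, one_mul]
    by_cases hle : e q ≤ α
    · rw [if_pos hle]
      change (if pair (α - e q + e q) = some q then coeff (α - e q + e q) F else 0) = _
      rw [tsub_add_cancel_of_le hle]
    · rw [if_neg hle, if_neg fun hq => hle (pair_spec α q hq).2]
  have hdecomp :
      F = ∑ q ∈ Finset.univ.filter (fun q : σ × σ => q.1 ≠ q.2), X q.1 * X q.2 * G q := by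
    ext α
    rw [map_sum]
    simp_rw [coeff_term]
    cases hα : pair α with
    | none =>
      simp only [pair, dite_eq_right_iff, reduceCtorEq, imp_false] at hα
      obtain ⟨i, hi⟩ := Finsupp.exists_eq_single_of_forall_not_single_add_single_le
        fun i j hij hle => hα ⟨(i, j), hij, hle⟩
      rw [Finset.sum_eq_zero fun q _ => if_neg (Option.some_ne_none q).symm, hi,
        ← coeff_restrictAxis, hF, map_zero]
    | some q =>
      simp [(pair_spec α q hα).1]
  rw [hdecomp]
  exact Ideal.sum_mem _ fun q hq =>
    Ideal.mul_mem_right _ _ (Ideal.subset_span ⟨q.1, q.2, (Finset.mem_filter.1 hq).2, rfl⟩)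

end MvPowerSeries

namespace PowerSeries

variable {R : Type*} [CommRing R]

theorem ringHom_eq_id {g : R⟦X⟧ →+* R⟦X⟧} (hC : g.comp C = C) (hX : g X = X) :
    g = RingHom.id _ := by
  have hpoly (P : Polynomial R) : g P = P := by
    have := Polynomial.ringHom_ext (f := g.comp Polynomial.coeToPowerSeries.ringHom)
      (g := Polynomial.coeToPowerSeries.ringHom)
      (fun a => by simpa using RingHom.congr_fun hC a) (by simpa using hX)
    simpa using RingHom.congr_fun this P
  ext1 f
  refine PowerSeries.ext fun n => ?_
  obtain ⟨h, hh⟩ : X ^ (n + 1) ∣ f - (trunc (n + 1) f : R⟦X⟧) := X_pow_dvd_iff.2 fun m hm => by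
    rw [map_sub, coeff_coe_trunc_of_lt hm, sub_self]
  have hdvd : X ^ (n + 1) ∣ g f - f := by
    have hf : f = (trunc (n + 1) f : R⟦X⟧) + X ^ (n + 1) * h := by rw [← hh]; ring
    refine ⟨g h - h, ?_⟩
    conv_lhs => rw [hf]
    rw [map_add, map_mul, map_pow, hX, hpoly]
    ring
  rw [RingHom.id_apply, ← sub_eq_zero, ← map_sub]
  exact X_pow_dvd_iff.1 hdvd n n.lt_succ_self

end PowerSeries

theorem LinearMap.exists_mul_eq_of_forall_dvd {A M : Type*} [CommSemiring A] [AddCommMonoid M]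
    [Module A M] {a : A} (ha : IsLeftRegular a) (S : M →ₗ[A] A) (hS : ∀ m, a ∣ S m) :
    ∃ φ : M →ₗ[A] A, ∀ m, a * φ m = S m := by
  choose φ hφ using hS
  refine ⟨{ toFun := φ, map_add' := fun m m' => ha ?_, map_smul' := fun c m => ha ?_ },
    fun m => (hφ m).symm⟩
  · simp only [mul_add, ← hφ, map_add]
  · simp only [← hφ, map_smul, smul_eq_mul, RingHom.id_apply]; rw [hφ]; ring

/-- `I • Hom_Λ(A, Λ)` for the `A`-action `(t • φ)(x) = φ(t x)`. -/
def Ideal.smulDual (Λ : Type*) {A : Type*} [CommSemiring Λ] [Semiring A] [Algebra Λ A]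
    (I : Ideal A) : Submodule Λ (A →ₗ[Λ] Λ) :=
  Submodule.span Λ {ψ | ∃ t ∈ I, ∃ φ : A →ₗ[Λ] Λ, ψ = φ ∘ₗ LinearMap.mulLeft Λ t}

theorem finrank_ker_sum_proj {K σ : Type*} [Field K] [Fintype σ] [Nonempty σ] :
    Module.finrank K (LinearMap.ker (∑ i, LinearMap.proj i : (σ → K) →ₗ[K] K)) =
      Fintype.card σ - 1 := by
  classical
  have hrange : LinearMap.range (∑ i, LinearMap.proj i : (σ → K) →ₗ[K] K) = ⊤ :=
    LinearMap.range_eq_top.2 fun c => ⟨Pi.single (Classical.arbitrary σ) c, by simp⟩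
  have := LinearMap.finrank_range_add_finrank_ker (∑ i, LinearMap.proj i : (σ → K) →ₗ[K] K)
  rw [hrange, finrank_top, Module.finrank_self, Module.finrank_fintype_fun_eq_card] at this
  omega

/-- The ring of the union of the coordinate axes; `Tring p` unfolds to `AxesRing (Fin 4) ℚ_[p]`
and `maxIdealT p` to `Ideal.span (Set.range AxesRing.X)`. -/
abbrev AxesRing (σ R : Type*) [CommRing R] := MvPowerSeries σ R ⧸ MvPowerSeries.axesIdeal σ R

namespace AxesRing

open MvPowerSeries (restrictAxis restrictAxis_X)

variable {σ R : Type*} [CommRing R]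

def X (i : σ) : AxesRing σ R := Ideal.Quotient.mk _ (MvPowerSeries.X i)

def toAxis (i : σ) : AxesRing σ R →+* R⟦X⟧ :=
  Ideal.Quotient.lift _ (restrictAxis i) (MvPowerSeries.axesIdeal_le_ker_restrictAxis i)

@[simp]
theorem toAxis_mk (i : σ) (F : MvPowerSeries σ R) :
    toAxis i (Ideal.Quotient.mk _ F) = restrictAxis i F :=
  Ideal.Quotient.lift_mk _ _ _

theorem toAxis_X [DecidableEq σ] (i j : σ) :
    toAxis i (X j : AxesRing σ R) = if j = i then PowerSeries.X else 0 :=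
  restrictAxis_X i j

theorem ext_toAxis [Finite σ] [Nonempty σ] {s t : AxesRing σ R}
    (h : ∀ i, toAxis i s = toAxis i t) : s = t := by
  obtain ⟨F, rfl⟩ := Ideal.Quotient.mk_surjective s
  obtain ⟨G, rfl⟩ := Ideal.Quotient.mk_surjective t
  refine Ideal.Quotient.eq.2 (MvPowerSeries.mem_axesIdeal_of_restrictAxis_eq_zero fun i => ?_)
  simpa [sub_eq_zero] using h i

theorem constantCoeff_toAxis (i j : σ) (t : AxesRing σ R) :
    PowerSeries.constantCoeff (toAxis i t) = PowerSeries.constantCoeff (toAxis j t) := by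
  obtain ⟨F, rfl⟩ := Ideal.Quotient.mk_surjective t
  simp

theorem constantCoeff_toAxis_eq_zero {t : AxesRing σ R}
    (ht : t ∈ Ideal.span (Set.range (X : σ → AxesRing σ R))) (i : σ) :
    PowerSeries.constantCoeff (toAxis i t) = 0 := by
  classical
  have hle : Ideal.span (Set.range (X : σ → AxesRing σ R)) ≤
      RingHom.ker ((PowerSeries.constantCoeff (R := R)).comp (toAxis i)) := by
    rw [Ideal.span_le]
    rintro _ ⟨j, rfl⟩
    simp [toAxis_X]
    split_ifs <;> simp
  exact hle ht

section Algebra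

variable [Algebra R⟦X⟧ (AxesRing σ R)]

@[simps]
def constCoeffAtX : (AxesRing σ R →ₗ[R⟦X⟧] R⟦X⟧) →ₗ[R] (σ → R) where
  toFun φ i := PowerSeries.constantCoeff (φ (X i))
  map_add' φ ψ := by ext; simp
  map_smul' c φ := by ext; simp

variable [Fintype σ]
  (h1 : ∀ a : R, algebraMap R⟦X⟧ (AxesRing σ R) (PowerSeries.C a) = algebraMap R (AxesRing σ R) a)
  (h2 : algebraMap R⟦X⟧ (AxesRing σ R) PowerSeries.X =
    Ideal.Quotient.mk _ (∑ i, MvPowerSeries.X i))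
include h1 h2

theorem toAxis_algebraMap (i : σ) (f : R⟦X⟧) :
    toAxis i (algebraMap R⟦X⟧ (AxesRing σ R) f) = f := by
  classical
  refine RingHom.congr_fun (PowerSeries.ringHom_eq_id (g := (toAxis i).comp (algebraMap _ _))
    (RingHom.ext fun a => ?_) ?_) f
  · simp [h1, ← Ideal.Quotient.mk_algebraMap, MvPowerSeries.algebraMap_apply]
  · simp [h2, restrictAxis_X]

theorem toAxis_smul (i : σ) (f : R⟦X⟧) (t : AxesRing σ R) :
    toAxis i (f • t) = f * toAxis i t := by
  rw [Algebra.smul_def, map_mul, toAxis_algebraMap h1 h2]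

theorem X_mul_eq_smul [Nonempty σ] (i : σ) (t : AxesRing σ R) : X i * t = toAxis i t • X i := by
  classical
  refine ext_toAxis fun j => ?_
  rw [map_mul, toAxis_smul h1 h2, toAxis_X]
  split_ifs with h
  · rw [h, mul_comm]
  · rw [zero_mul, mul_zero]

theorem map_X_mul [Nonempty σ] (φ : AxesRing σ R →ₗ[R⟦X⟧] R⟦X⟧) (i : σ) (t : AxesRing σ R) :
    φ (X i * t) = toAxis i t * φ (X i) := by
  rw [X_mul_eq_smul h1 h2, map_smul, smul_eq_mul]

theorem X_mul_apply [Nonempty σ] (φ : AxesRing σ R →ₗ[R⟦X⟧] R⟦X⟧) (t : AxesRing σ R) :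
    PowerSeries.X * φ t = ∑ i, toAxis i t * φ (X i) := by
  rw [← smul_eq_mul, ← map_smul, Algebra.smul_def, h2, map_sum, Finset.sum_mul, map_sum]
  exact Finset.sum_congr rfl fun i _ => map_X_mul h1 h2 φ i t

theorem sum_constCoeffAtX [Nonempty σ] (φ : AxesRing σ R →ₗ[R⟦X⟧] R⟦X⟧) :
    ∑ i, constCoeffAtX φ i = 0 := by
  simpa using (congrArg PowerSeries.constantCoeff (X_mul_apply h1 h2 φ 1)).symm

theorem exists_linearMap_apply_X [Nonempty σ] (v : σ → R) (hv : ∑ i, v i = 0) :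
    ∃ φ : AxesRing σ R →ₗ[R⟦X⟧] R⟦X⟧, ∀ i, φ (X i) = PowerSeries.C (v i) := by
  classical
  let S : AxesRing σ R →ₗ[R⟦X⟧] R⟦X⟧ :=
    { toFun t := ∑ i, PowerSeries.C (v i) * toAxis i t
      map_add' s t := by simp [mul_add, Finset.sum_add_distrib]
      map_smul' f t := by
        simp only [toAxis_smul h1 h2, smul_eq_mul, RingHom.id_apply, Finset.mul_sum]
        exact Finset.sum_congr rfl fun i _ => by ring }
  have hS : ∀ t, PowerSeries.X ∣ S t := fun t => by
    obtain ⟨i₀⟩ := ‹Nonempty σ›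
    rw [PowerSeries.X_dvd_iff]
    simp [S, constantCoeff_toAxis _ i₀ t, ← Finset.sum_mul, hv]
  obtain ⟨φ, hφ⟩ := LinearMap.exists_mul_eq_of_forall_dvd
    (fun _ _ => PowerSeries.X_mul_cancel) S hS
  refine ⟨φ, fun j => PowerSeries.X_mul_cancel ?_⟩
  rw [hφ]
  simp [S, toAxis_X, mul_comm]

theorem range_constCoeffAtX [Nonempty σ] :
    LinearMap.range (constCoeffAtX (σ := σ) (R := R)) =
      LinearMap.ker (∑ i, LinearMap.proj i : (σ → R) →ₗ[R] R) := by
  ext v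
  constructor
  · rintro ⟨φ, rfl⟩
    simpa using sum_constCoeffAtX h1 h2 φ
  · intro hv
    obtain ⟨φ, hφ⟩ := exists_linearMap_apply_X h1 h2 v (by simpa using hv)
    exact ⟨φ, funext fun i => by simp [hφ]⟩

theorem smulDual_le_ker_constCoeffAtX [Nonempty σ] :
    ((Ideal.span (Set.range (X : σ → AxesRing σ R))).smulDual R⟦X⟧).restrictScalars R ≤
      LinearMap.ker constCoeffAtX := by
  intro ψ hψ
  rw [Submodule.restrictScalars_mem] at hψ
  induction hψ using Submodule.span_induction with
  | mem _ hψ =>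
    obtain ⟨t, ht, φ, rfl⟩ := hψ
    ext i
    simp [mul_comm t, map_X_mul h1 h2, constantCoeff_toAxis_eq_zero ht]
  | zero => exact zero_mem _
  | add _ _ _ _ hφ hψ => exact add_mem hφ hψ
  | smul f φ _ hφ =>
    ext i
    simp [show PowerSeries.constantCoeff (φ (X i)) = 0 from congrFun (LinearMap.mem_ker.1 hφ) i]

theorem ker_constCoeffAtX_le_smulDual [Nontrivial σ] :
    LinearMap.ker constCoeffAtX ≤
      ((Ideal.span (Set.range (X : σ → AxesRing σ R))).smulDual R⟦X⟧).restrictScalars R := by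
  classical
  intro φ hφ
  have hφ' : ∀ i, PowerSeries.constantCoeff (φ (X i)) = 0 :=
    fun i => congrFun (LinearMap.mem_ker.1 hφ) i
  choose h hh using fun i => PowerSeries.X_dvd_iff.2 (hφ' i)
  have exists_apply_X_eq_one : ∀ i, ∃ ψ : AxesRing σ R →ₗ[R⟦X⟧] R⟦X⟧, ψ (X i) = 1 := fun i => by
    obtain ⟨k, hk⟩ := exists_ne i
    obtain ⟨ψ, hψ⟩ := exists_linearMap_apply_X h1 h2 (Pi.single i 1 - Pi.single k 1) (by simp)
    exact ⟨ψ, by simp [hψ, Pi.single_eq_of_ne' hk]⟩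
  choose ψ hψ using exists_apply_X_eq_one
  have hφ_eq : φ = ∑ i, h i • (ψ i ∘ₗ LinearMap.mulLeft R⟦X⟧ (X i)) :=
    LinearMap.ext fun t => PowerSeries.X_mul_cancel (by
      simp only [X_mul_apply h1 h2, hh, LinearMap.sum_apply, LinearMap.smul_apply,
        LinearMap.comp_apply, LinearMap.mulLeft_apply, map_X_mul h1 h2, hψ, Finset.mul_sum]
      exact Finset.sum_congr rfl fun i _ => by ring)
  rw [Submodule.restrictScalars_mem, hφ_eq]
  exact Submodule.sum_mem _ fun i _ => Submodule.smul_mem _ _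
    (Submodule.subset_span ⟨X i, Ideal.subset_span ⟨i, rfl⟩, ψ i, rfl⟩)

end Algebra

theorem finrank_quotient_smulDual {σ K : Type*} [Fintype σ] [Nontrivial σ] [Field K]
    [Algebra K⟦X⟧ (AxesRing σ K)]
    (h1 : ∀ a : K, algebraMap K⟦X⟧ (AxesRing σ K) (PowerSeries.C a) = algebraMap K (AxesRing σ K) a)
    (h2 : algebraMap K⟦X⟧ (AxesRing σ K) PowerSeries.X =
      Ideal.Quotient.mk _ (∑ i, MvPowerSeries.X i)) :
    Module.finrank K ((AxesRing σ K →ₗ[K⟦X⟧] K⟦X⟧) ⧸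
      (Ideal.span (Set.range (X : σ → AxesRing σ K))).smulDual K⟦X⟧) = Fintype.card σ - 1 := by
  set M := (Ideal.span (Set.range (X : σ → AxesRing σ K))).smulDual K⟦X⟧
  have hker : M.restrictScalars K = LinearMap.ker constCoeffAtX :=
    le_antisymm (smulDual_le_ker_constCoeffAtX h1 h2) (ker_constCoeffAtX_le_smulDual h1 h2)
  calc Module.finrank K ((AxesRing σ K →ₗ[K⟦X⟧] K⟦X⟧) ⧸ M)
      = Module.finrank K ((AxesRing σ K →ₗ[K⟦X⟧] K⟦X⟧) ⧸ M.restrictScalars K) :=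
        (Submodule.Quotient.restrictScalarsEquiv K M).finrank_eq.symm
    _ = Module.finrank K (LinearMap.range constCoeffAtX) := by
        have := (constCoeffAtX (σ := σ) (R := K)).quotKerEquivRange.finrank_eq
        rw [hker]
        exact this
    _ = Fintype.card σ - 1 := by
        rw [range_constCoeffAtX h1 h2, finrank_ker_sum_proj]

end AxesRing

/-- for the `Λ = ℚ_p[[X]]`-algebra structure on `𝒯` determined by
`X ↦ X₁+X₂+X₃+X₄` (and fixing `ℚ_p`), the `𝒯`-module `Hom_Λ(𝒯, Λ)` needs exactly `3`
generators: `dim_{ℚ_p} Hom_Λ(𝒯,Λ) ⊗_𝒯 𝒯/𝔪_𝒯 = 3`, where the quotient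
`Hom_Λ(𝒯,Λ)/𝔪_𝒯·Hom_Λ(𝒯,Λ)` realizes the tensor product. -/
theorem hom_needs_three_generators (p : ℕ) [Fact p.Prime]
    [Algebra (PowerSeries ℚ_[p]) (Tring p)]
    (h1 : ∀ a : ℚ_[p],
      algebraMap (PowerSeries ℚ_[p]) (Tring p) (PowerSeries.C a) =
        algebraMap ℚ_[p] (Tring p) a)
    (h2 : algebraMap (PowerSeries ℚ_[p]) (Tring p) PowerSeries.X =
      Ideal.Quotient.mk (mixedProductsIdeal p) (∑ i : Fin 4, MvPowerSeries.X i)) :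
    Module.finrank ℚ_[p]
      ((Tring p →ₗ[PowerSeries ℚ_[p]] PowerSeries ℚ_[p]) ⧸
        Submodule.span (PowerSeries ℚ_[p])
          {ψ : Tring p →ₗ[PowerSeries ℚ_[p]] PowerSeries ℚ_[p] |
            ∃ t ∈ maxIdealT p, ∃ φ : Tring p →ₗ[PowerSeries ℚ_[p]] PowerSeries ℚ_[p],
              ψ = φ ∘ₗ LinearMap.mulLeft (PowerSeries ℚ_[p]) t}) = 3 := by
  exact @AxesRing.finrank_quotient_smulDual (Fin 4) ℚ_[p] _ _ _ ‹_› h1 h2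
end
end

section
/- Let $K$ be a field of characteristic $0$ and let $s,s',s''\in K$ be pairwise distinct, and $L_1,L_2,L_3\in K$ with $P_L(u)=L_1-L_2u-L_3u^2\ne0$ for $u\in\{s,s',s''\}$. Define $x = -\tfrac{1}{2}(L_2+2sL_3)/P_L(s)$ and similarly $x',x''$ for $s',s''$. Then the determinant of the matrix with rows $(x,x',x'')$, $(s(1-sx), s'(1-s'x'), s''(1-s''x''))$, $(1,1,1)$ equals $-\tfrac14 (s-s')(s-s'')(s'-s'')\cdot \dfrac{L_2(L_2^2+4L_1L_3)}{P_L(s)P_L(s')P_L(s'')}$. -/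
/-!
Multiplying the column of `s` by `P_L(s)` turns its entries into the values at `s` of three
quadratic polynomials: `-P_L'(s)/2`, `L₁ s - L₂ s²/2` and `P_L(s)`. A matrix of values of
quadratics at three points is the coefficient matrix times the Vandermonde matrix of the points,
so the scaled determinant is `(s' - s)(s'' - s)(s'' - s')` times the determinant of the
coefficients, which works out to `L₂ (L₂² + 4 L₁ L₃) / 4`.
-/

open Matrix

theorem Matrix.det_eval_polynomials_eq_det_mul_det_vandermonde {R : Type*} [CommRing R] {n : ℕ}
    (C : Matrix (Fin n) (Fin n) R) (v : Fin n → R) :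
    det (of fun i j => ∑ k : Fin n, C i k * v j ^ (k : ℕ)) = det C * det (vandermonde v) := by
  rw [← det_transpose (vandermonde v), ← det_mul]
  rfl

theorem Matrix.det_vandermonde_fin_three {R : Type*} [CommRing R] (a b c : R) :
    det (vandermonde ![a, b, c]) = (b - a) * (c - a) * (c - b) := by
  rw [det_fin_three]
  simp only [vandermonde_apply, cons_val_zero, cons_val_one, cons_val, Fin.val_zero, Fin.val_one,
    Fin.val_two]
  ring

section Slopes

variable {K : Type*} [Field K] [NeZero (2 : K)]

/-- Row `i` lists the coefficients of `1, u, u²` in the `i`-th entry of the column of `u`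
multiplied by `P_L(u)`. -/
def slopeCoeffMatrix (L1 L2 L3 : K) : Matrix (Fin 3) (Fin 3) K :=
  !![-(1 / 2) * L2, -L3, 0; 0, L1, -(1 / 2) * L2; L1, -L2, -L3]

theorem det_slopeCoeffMatrix (L1 L2 L3 : K) :
    det (slopeCoeffMatrix L1 L2 L3) = L2 * (L2 ^ 2 + 4 * L1 * L3) / 4 := by
  rw [det_fin_three, show (4 : K) = 2 ^ 2 by norm_num]
  simp only [slopeCoeffMatrix, of_apply, cons_val', cons_val_zero, cons_val_one, cons_val,
    cons_val_fin_one]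
  field_simp
  ring

theorem mul_slopeColumn_eq_sum_slopeCoeffMatrix {L1 L2 L3 u x : K}
    (hP : L1 - L2 * u - L3 * u ^ 2 ≠ 0)
    (hx : x = -(1 / 2) * (L2 + 2 * u * L3) / (L1 - L2 * u - L3 * u ^ 2)) (i : Fin 3) :
    (L1 - L2 * u - L3 * u ^ 2) * ![x, u * (1 - u * x), 1] i =
      ∑ k : Fin 3, slopeCoeffMatrix L1 L2 L3 i k * u ^ (k : ℕ) := by
  have hPx : (L1 - L2 * u - L3 * u ^ 2) * x = -(1 / 2) * L2 - L3 * u := by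
    rw [hx, mul_div_cancel₀ _ hP]
    field_simp
    ring
  have hPy : (L1 - L2 * u - L3 * u ^ 2) * (u * (1 - u * x)) = L1 * u - 1 / 2 * L2 * u ^ 2 := by
    linear_combination (norm := skip) (-u ^ 2) * hPx
    field_simp
    ring
  fin_cases i <;> simp [slopeCoeffMatrix, Fin.sum_univ_three, hPx, hPy] <;> ring

end Slopes

theorem det_three_slopes_general (K : Type*) [Field K] [CharZero K]
    (L1 L2 L3 s s' s'' : K)
    (hPLs : L1 - L2 * s - L3 * s ^ 2 ≠ 0)
    (hPLs' : L1 - L2 * s' - L3 * s' ^ 2 ≠ 0)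
    (hPLs'' : L1 - L2 * s'' - L3 * s'' ^ 2 ≠ 0)
    (x x' x'' : K)
    (hx : x = -(1 / 2) * (L2 + 2 * s * L3) / (L1 - L2 * s - L3 * s ^ 2))
    (hx' : x' = -(1 / 2) * (L2 + 2 * s' * L3) / (L1 - L2 * s' - L3 * s' ^ 2))
    (hx'' : x'' = -(1 / 2) * (L2 + 2 * s'' * L3) / (L1 - L2 * s'' - L3 * s'' ^ 2)) :
    Matrix.det !![x, x', x'';
                  s * (1 - s * x), s' * (1 - s' * x'), s'' * (1 - s'' * x'');
                  1, 1, 1] =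
      -(1 / 4) * (s - s') * (s - s'') * (s' - s'') *
        (L2 * (L2 ^ 2 + 4 * L1 * L3)) /
          ((L1 - L2 * s - L3 * s ^ 2) * (L1 - L2 * s' - L3 * s' ^ 2) *
            (L1 - L2 * s'' - L3 * s'' ^ 2)) := by
  set t : Fin 3 → K := ![s, s', s'']
  set xs : Fin 3 → K := ![x, x', x'']
  set P : Fin 3 → K := fun j => L1 - L2 * t j - L3 * t j ^ 2
  have hP : ∏ j, P j = (L1 - L2 * s - L3 * s ^ 2) * (L1 - L2 * s' - L3 * s' ^ 2) *
      (L1 - L2 * s'' - L3 * s'' ^ 2) := by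
    simp [P, t, Fin.prod_univ_three]
  have hcols : (of fun i j => P j * ![xs j, t j * (1 - t j * xs j), 1] i) =
      of fun i j => ∑ k : Fin 3, slopeCoeffMatrix L1 L2 L3 i k * t j ^ (k : ℕ) := by
    ext i j
    fin_cases j
    · exact mul_slopeColumn_eq_sum_slopeCoeffMatrix hPLs hx i
    · exact mul_slopeColumn_eq_sum_slopeCoeffMatrix hPLs' hx' i
    · exact mul_slopeColumn_eq_sum_slopeCoeffMatrix hPLs'' hx'' i
  calc _ = det (of fun i j => ![xs j, t j * (1 - t j * xs j), 1] i) := by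
        congr
        ext i j
        fin_cases i <;> fin_cases j <;> rfl
    _ = det (slopeCoeffMatrix L1 L2 L3) * det (vandermonde t) / ∏ j, P j := by
        rw [eq_div_iff (hP ▸ mul_ne_zero (mul_ne_zero hPLs hPLs') hPLs''),
          mul_comm, ← det_mul_row]
        simp only [of_apply]
        rw [hcols, det_eval_polynomials_eq_det_mul_det_vandermonde]
    _ = _ := by
        rw [det_vandermonde_fin_three, det_slopeCoeffMatrix, hP]
        ring

/-- the 3×3 determinant identity for the slopes `x, x', x''`. -/
theorem det_three_slopes (K : Type*) [Field K] [CharZero K]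
    (L1 L2 L3 s s' s'' : K)
    (hss' : s ≠ s') (hss'' : s ≠ s'') (hs's'' : s' ≠ s'')
    (hPLs : L1 - L2 * s - L3 * s ^ 2 ≠ 0)
    (hPLs' : L1 - L2 * s' - L3 * s' ^ 2 ≠ 0)
    (hPLs'' : L1 - L2 * s'' - L3 * s'' ^ 2 ≠ 0)
    (x x' x'' : K)
    (hx : x = -(1 / 2) * (L2 + 2 * s * L3) / (L1 - L2 * s - L3 * s ^ 2))
    (hx' : x' = -(1 / 2) * (L2 + 2 * s' * L3) / (L1 - L2 * s' - L3 * s' ^ 2))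
    (hx'' : x'' = -(1 / 2) * (L2 + 2 * s'' * L3) / (L1 - L2 * s'' - L3 * s'' ^ 2)) :
    Matrix.det !![x, x', x'';
                  s * (1 - s * x), s' * (1 - s' * x'), s'' * (1 - s'' * x'');
                  1, 1, 1] =
      -(1 / 4) * (s - s') * (s - s'') * (s' - s'') *
        (L2 * (L2 ^ 2 + 4 * L1 * L3)) /
          ((L1 - L2 * s - L3 * s ^ 2) * (L1 - L2 * s' - L3 * s' ^ 2) *
            (L1 - L2 * s'' - L3 * s'' ^ 2)) :=
  det_three_slopes_general K L1 L2 L3 s s' s'' hPLs hPLs' hPLs'' x x' x'' hx hx' hx''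
end
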